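/- arXiv:1807.06435 — 5 statements merged into one kernel-verified Lean document; each statement's English description precedes it below -/
import Mathlib

section
/- Let m ≥ 1, let ε > 0, and let X be a finite set of points of the Euclidean space ℝ^m. If the intersection ⋂_{x∈X} B(x,ε) of the open Euclidean balls of radius ε centered at the points of X is nonempty, then the convex hull of X is contained in the open ε-neighborhood U(X,ε) := ⋃_{x∈X} B(x,ε). (Lemma 5.1 of the paper.) -/
/-!
Let `p` lie in every ball `B(x, ε)`, `x ∈ X`, and let `y` be in the convex hull of `X`. The linear
functional `⟪p - y, ·⟫` attains at some `x ∈ X` a value at most its value at `y`, i.e.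
`⟪p - y, x - y⟫ ≤ 0`. Then the angle at `y` of the triangle `p y x` is not acute, so
`‖x - y‖ ≤ ‖x - p‖ < ε`.
-/

open Metric

variable {E : Type*} [NormedAddCommGroup E] [InnerProductSpace ℝ E]

lemma exists_inner_le_of_mem_convexHull {X : Set E} {y : E} (hy : y ∈ convexHull ℝ X) (v : E) :
    ∃ x ∈ X, inner ℝ v x ≤ inner ℝ v y :=
  ((innerSL ℝ v).toLinearMap.concaveOn convex_univ).exists_le_of_mem_convexHull
    (Set.subset_univ X) hy

lemma dist_le_dist_of_inner_sub_nonpos {x y p : E} (h : inner ℝ (p - y) (x - y) ≤ 0) :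
    dist x y ≤ dist x p := by
  have hsq : ‖x - p‖ ^ 2 = ‖x - y‖ ^ 2 - 2 * inner ℝ (x - y) (p - y) + ‖p - y‖ ^ 2 := by
    rw [← norm_sub_sq_real, sub_sub_sub_cancel_right]
  rw [dist_eq_norm, dist_eq_norm]
  refine le_of_sq_le_sq ?_ (norm_nonneg _)
  nlinarith [real_inner_comm (x - y) (p - y), sq_nonneg ‖p - y‖]

lemma convexHull_subset_iUnion_ball_of_mem_iInter {X : Set E} {p : E} {ε : ℝ}
    (hp : p ∈ ⋂ x ∈ X, ball x ε) : convexHull ℝ X ⊆ ⋃ x ∈ X, ball x ε := by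
  intro y hy
  obtain ⟨x, hxX, hx⟩ := exists_inner_le_of_mem_convexHull hy (p - y)
  have hpx : dist x p < ε := by
    rw [dist_comm]
    exact Set.mem_iInter₂.mp hp x hxX
  have hyx : dist x y ≤ dist x p :=
    dist_le_dist_of_inner_sub_nonpos (by rwa [inner_sub_right, sub_nonpos])
  exact Set.mem_iUnion₂.mpr ⟨x, hxX, by rw [mem_ball, dist_comm]; exact hyx.trans_lt hpx⟩

theorem convexHull_subset_union_balls_general
    (m : ℕ) (ε : ℝ)
    (X : Set (EuclideanSpace ℝ (Fin m)))
    (h : (⋂ x ∈ X, Metric.ball x ε).Nonempty) :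
    convexHull ℝ X ⊆ ⋃ x ∈ X, Metric.ball x ε :=
  convexHull_subset_iUnion_ball_of_mem_iInter h.some_mem

/-- Lemma 5.1.  Let `m ≥ 1`, `ε > 0`, and let `X` be a finite set of
points of `ℝ^m`.  If the intersection of the open balls `B(x, ε)` for `x ∈ X` is nonempty,
then the convex hull of `X` is contained in the open `ε`-neighborhood
`U(X, ε) = ⋃ x ∈ X, B(x, ε)`. -/
theorem convexHull_subset_union_balls
    (m : ℕ) (hm : 1 ≤ m) (ε : ℝ) (hε : 0 < ε)
    (X : Set (EuclideanSpace ℝ (Fin m))) (hX : X.Finite)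
    (h : (⋂ x ∈ X, Metric.ball x ε).Nonempty) :
    convexHull ℝ X ⊆ ⋃ x ∈ X, Metric.ball x ε :=
  convexHull_subset_union_balls_general m ε X h
end

section
/- Let m ≥ 1, ε > 0, and let X be a nonempty finite set of points of ℝ^m. For x ∈ X define ρ_x : U(X,ε) → ℝ by ρ_x(p) := max(ε − ‖p − x‖, 0), and define g : U(X,ε) → ℝ^m by g(p) := (Σ_{x∈X} ρ_x(p))⁻¹ · Σ_{x∈X} ρ_x(p)·x. Then: (a) Σ_{x∈X} ρ_x(p) > 0 for every p ∈ U(X,ε), so g is a well-defined continuous map; (b) g(p) ∈ U(X,ε) for all p ∈ U(X,ε); (c) for every p ∈ U(X,ε) and every t ∈ [0,1], the point (1−t)p + t·g(p) lies in U(X,ε); consequently g, regarded as a continuous self-map of U(X,ε), is homotopic to the identity of U(X,ε) via the linear homotopy (p,t) ↦ (1−t)p + t·g(p). (Core of the proof of the Explicit Homological Nerve Theorem, Theorem 5.4.) -/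
open Metric unitInterval

/-- The bump function `ρ_x(p) = max(ε - ‖p - x‖, 0)`. -/
noncomputable def rhoFn (m : ℕ) (ε : ℝ) (x p : EuclideanSpace ℝ (Fin m)) : ℝ :=
  max (ε - ‖p - x‖) 0

/-- The map `g(p) = (Σ_{x∈X} ρ_x(p))⁻¹ • Σ_{x∈X} ρ_x(p) • x`. -/
noncomputable def gFn (m : ℕ) (ε : ℝ) (X : Finset (EuclideanSpace ℝ (Fin m)))
    (p : EuclideanSpace ℝ (Fin m)) : EuclideanSpace ℝ (Fin m) :=
  (∑ x ∈ X, rhoFn m ε x p)⁻¹ • ∑ x ∈ X, rhoFn m ε x p • x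

/-- The open `ε`-neighborhood `U(X, ε) = ⋃ x ∈ X, B(x, ε)`. -/
def nbhdU (m : ℕ) (ε : ℝ) (X : Finset (EuclideanSpace ℝ (Fin m))) :
    Set (EuclideanSpace ℝ (Fin m)) :=
  ⋃ x ∈ X, Metric.ball x ε

/-!
Fix `p ∈ U(X, ε)`, put `w x = ρ_x(p)` and `Φ(q) = Σ_x w x ‖q - x‖²`. Since `g(p)` is the
`w`-barycenter of `X`, the parallel axis identity gives `Φ(q) = (Σ w) ‖q - g(p)‖² + Φ(g(p))`, so `Φ`
does not increase along the segment from `p` to `g(p)`. Only points with `‖p - x‖ < ε` carry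
weight, hence `Φ(p) < (Σ w) ε²`, and so at every `q` of the segment some `x ∈ X` has `‖q - x‖ < ε`.
The homotopy is then the straight-line one.
-/

namespace Finset

variable {ι E : Type*} [NormedAddCommGroup E] [InnerProductSpace ℝ E]
  {s : Finset ι} {w : ι → ℝ} {z : ι → E}

theorem exists_lt_of_sum_mul_lt_sum_mul {f : ι → ℝ} {c : ℝ} (hw : ∀ i ∈ s, 0 ≤ w i)
    (h : ∑ i ∈ s, w i * f i < (∑ i ∈ s, w i) * c) : ∃ i ∈ s, f i < c := by
  rw [sum_mul] at h
  obtain ⟨i, hi, hlt⟩ := exists_lt_of_sum_lt h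
  exact ⟨i, hi, lt_of_mul_lt_mul_left hlt (hw i hi)⟩

theorem sum_smul_centerMass_sub (hw : ∑ i ∈ s, w i ≠ 0) :
    ∑ i ∈ s, w i • (s.centerMass w z - z i) = 0 := by
  simp only [smul_sub, sum_sub_distrib, ← sum_smul, centerMass, smul_inv_smul₀ hw, sub_self]

-- Huygens–Steiner (parallel axis) identity.
theorem sum_mul_norm_sub_sq_eq (hw : ∑ i ∈ s, w i ≠ 0) (q : E) :
    ∑ i ∈ s, w i * ‖q - z i‖ ^ 2 =
      (∑ i ∈ s, w i) * ‖q - s.centerMass w z‖ ^ 2 +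
        ∑ i ∈ s, w i * ‖s.centerMass w z - z i‖ ^ 2 := by
  have hcross : ∑ i ∈ s, w i * inner ℝ (q - s.centerMass w z) (s.centerMass w z - z i) = 0 := by
    simp_rw [← real_inner_smul_right, ← inner_sum, sum_smul_centerMass_sub hw, inner_zero_right]
  set b := s.centerMass w z
  have hterm : ∀ i ∈ s, w i * ‖q - z i‖ ^ 2 =
      w i * ‖q - b‖ ^ 2 + 2 * (w i * inner ℝ (q - b) (b - z i)) + w i * ‖b - z i‖ ^ 2 := by
    intro i _
    rw [← sub_add_sub_cancel q b (z i), norm_add_sq_real]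
    ring
  rw [sum_congr rfl hterm, sum_add_distrib, sum_add_distrib, ← mul_sum, hcross, sum_mul]
  ring

theorem sum_mul_norm_sub_sq_le_of_norm_sub_centerMass_le (hw : 0 < ∑ i ∈ s, w i) {p q : E}
    (hpq : ‖q - s.centerMass w z‖ ≤ ‖p - s.centerMass w z‖) :
    ∑ i ∈ s, w i * ‖q - z i‖ ^ 2 ≤ ∑ i ∈ s, w i * ‖p - z i‖ ^ 2 := by
  rw [sum_mul_norm_sub_sq_eq hw.ne' q, sum_mul_norm_sub_sq_eq hw.ne' p]
  gcongr

end Finset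

section Neighborhood

variable {m : ℕ} {ε : ℝ} {X : Finset (EuclideanSpace ℝ (Fin m))} {x p : EuclideanSpace ℝ (Fin m)}

theorem rhoFn_nonneg : 0 ≤ rhoFn m ε x p := le_max_right _ _

theorem rhoFn_pos_iff : 0 < rhoFn m ε x p ↔ ‖p - x‖ < ε := by
  simp [rhoFn]

@[fun_prop]
theorem continuous_rhoFn : Continuous (rhoFn m ε x) := by
  unfold rhoFn
  fun_prop

theorem mem_nbhdU_iff : p ∈ nbhdU m ε X ↔ ∃ x ∈ X, ‖p - x‖ < ε := by
  simp [nbhdU, dist_eq_norm]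

theorem sum_rhoFn_pos (hp : p ∈ nbhdU m ε X) : 0 < ∑ x ∈ X, rhoFn m ε x p := by
  obtain ⟨x, hxX, hx⟩ := mem_nbhdU_iff.mp hp
  exact Finset.sum_pos' (fun _ _ => rhoFn_nonneg) ⟨x, hxX, rhoFn_pos_iff.mpr hx⟩

theorem gFn_eq_centerMass : gFn m ε X p = X.centerMass (fun x => rhoFn m ε x p) id := rfl

theorem rhoFn_mul_norm_sub_sq_le : rhoFn m ε x p * ‖p - x‖ ^ 2 ≤ rhoFn m ε x p * ε ^ 2 := by
  rcases (rhoFn_nonneg : 0 ≤ rhoFn m ε x p).eq_or_lt with h | h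
  · simp [← h]
  · gcongr
    exact (rhoFn_pos_iff.mp h).le

theorem sum_rhoFn_mul_norm_sub_sq_lt (hp : p ∈ nbhdU m ε X) :
    ∑ x ∈ X, rhoFn m ε x p * ‖p - x‖ ^ 2 < (∑ x ∈ X, rhoFn m ε x p) * ε ^ 2 := by
  obtain ⟨x, hxX, hx⟩ := mem_nbhdU_iff.mp hp
  rw [Finset.sum_mul]
  refine Finset.sum_lt_sum (fun _ _ => rhoFn_mul_norm_sub_sq_le) ⟨x, hxX, ?_⟩
  gcongr
  exact rhoFn_pos_iff.mpr hx

theorem segment_gFn_subset_nbhdU (hp : p ∈ nbhdU m ε X) :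
    segment ℝ p (gFn m ε X p) ⊆ nbhdU m ε X := by
  intro q hq
  have hε : 0 ≤ ε := by
    obtain ⟨x, -, hx⟩ := mem_nbhdU_iff.mp hp
    exact (norm_nonneg _).trans hx.le
  have hqg : ‖q - gFn m ε X p‖ ≤ ‖p - gFn m ε X p‖ := by
    simpa [dist_eq_norm, norm_sub_rev] using
      (dist_add_dist_of_mem_segment hq).le.trans' (le_add_of_nonneg_left dist_nonneg)
  rw [gFn_eq_centerMass] at hqg
  have hsum := (Finset.sum_mul_norm_sub_sq_le_of_norm_sub_centerMass_le (z := id)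
    (sum_rhoFn_pos hp) hqg).trans_lt (sum_rhoFn_mul_norm_sub_sq_lt hp)
  obtain ⟨x, hxX, hx⟩ := Finset.exists_lt_of_sum_mul_lt_sum_mul (fun _ _ => rhoFn_nonneg) hsum
  exact mem_nbhdU_iff.mpr ⟨x, hxX, lt_of_pow_lt_pow_left₀ 2 hε hx⟩

theorem gFn_mem_nbhdU (hp : p ∈ nbhdU m ε X) : gFn m ε X p ∈ nbhdU m ε X :=
  segment_gFn_subset_nbhdU hp (right_mem_segment ℝ _ _)

theorem continuousOn_gFn : ContinuousOn (gFn m ε X) (nbhdU m ε X) := by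
  have hsum : Continuous fun p => ∑ x ∈ X, rhoFn m ε x p := by
    fun_prop
  exact (hsum.continuousOn.inv₀ fun p hp => (sum_rhoFn_pos hp).ne').smul (by fun_prop)

end Neighborhood

def ContinuousMap.Homotopy.affineCodRestrict {Y E : Type*} [TopologicalSpace Y]
    [AddCommGroup E] [TopologicalSpace E] [IsTopologicalAddGroup E] [Module ℝ E]
    [ContinuousSMul ℝ E] {U : Set E} (f g : C(Y, U))
    (h : ∀ y, segment ℝ (f y : E) (g y) ⊆ U) : f.Homotopy g where
  toFun q := ⟨(1 - (q.1 : ℝ)) • (f q.2 : E) + (q.1 : ℝ) • (g q.2 : E),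
    h q.2 (segment_eq_image ℝ (f q.2 : E) (g q.2) ▸ ⟨q.1, q.1.2, rfl⟩)⟩
  continuous_toFun := by fun_prop
  map_zero_left := by simp
  map_one_left := by simp

theorem gFn_selfmap_homotopic_id_general
    (m : ℕ) (ε : ℝ)
    (X : Finset (EuclideanSpace ℝ (Fin m))) :
    (∀ p ∈ nbhdU m ε X, 0 < ∑ x ∈ X, rhoFn m ε x p) ∧
    ContinuousOn (gFn m ε X) (nbhdU m ε X) ∧
    (∀ p ∈ nbhdU m ε X, gFn m ε X p ∈ nbhdU m ε X) ∧
    (∀ p ∈ nbhdU m ε X, ∀ t ∈ Set.Icc (0 : ℝ) 1,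
      (1 - t) • p + t • gFn m ε X p ∈ nbhdU m ε X) ∧
    ∃ G : C(↥(nbhdU m ε X), ↥(nbhdU m ε X)),
      (∀ p : ↥(nbhdU m ε X), (G p : EuclideanSpace ℝ (Fin m)) = gFn m ε X p) ∧
      ∃ H : (ContinuousMap.id ↥(nbhdU m ε X)).Homotopy G,
        ∀ (t : I) (p : ↥(nbhdU m ε X)),
          (H (t, p) : EuclideanSpace ℝ (Fin m)) =
            (1 - (t : ℝ)) • (p : EuclideanSpace ℝ (Fin m)) +
              (t : ℝ) • gFn m ε X (p : EuclideanSpace ℝ (Fin m)) := by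
  let G : C(nbhdU m ε X, nbhdU m ε X) :=
    ⟨_, continuousOn_gFn.mapsToRestrict fun _ => gFn_mem_nbhdU⟩
  refine ⟨fun _ => sum_rhoFn_pos, continuousOn_gFn, fun _ => gFn_mem_nbhdU,
    fun p hp t ht => segment_gFn_subset_nbhdU hp (segment_eq_image ℝ p _ ▸ ⟨t, ht, rfl⟩),
    G, fun _ => rfl, .affineCodRestrict _ G fun p => segment_gFn_subset_nbhdU p.2,
    fun _ _ => rfl⟩

/-- core of the proof of Theorem 5.4.  Let `m ≥ 1`, `ε > 0`, and let
`X ⊆ ℝ^m` be a nonempty finite set.  With `ρ_x(p) = max(ε - ‖p - x‖, 0)` and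
`g(p) = (Σ ρ_x(p))⁻¹ • Σ ρ_x(p) • x` one has:
(a) `Σ_{x∈X} ρ_x(p) > 0` on `U(X, ε)`, and `g` is continuous on `U(X, ε)`;
(b) `g` maps `U(X, ε)` into itself;
(c) for every `p ∈ U(X, ε)` and `t ∈ [0,1]`, the point `(1-t)p + t g(p)` lies in
`U(X, ε)`; consequently `g`, as a continuous self-map of `U(X, ε)`, is homotopic to the
identity via the linear homotopy `(p, t) ↦ (1-t)p + t g(p)`. -/
theorem gFn_selfmap_homotopic_id
    (m : ℕ) (hm : 1 ≤ m) (ε : ℝ) (hε : 0 < ε)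
    (X : Finset (EuclideanSpace ℝ (Fin m))) (hX : X.Nonempty) :
    (∀ p ∈ nbhdU m ε X, 0 < ∑ x ∈ X, rhoFn m ε x p) ∧
    ContinuousOn (gFn m ε X) (nbhdU m ε X) ∧
    (∀ p ∈ nbhdU m ε X, gFn m ε X p ∈ nbhdU m ε X) ∧
    (∀ p ∈ nbhdU m ε X, ∀ t ∈ Set.Icc (0 : ℝ) 1,
      (1 - t) • p + t • gFn m ε X p ∈ nbhdU m ε X) ∧
    ∃ G : C(↥(nbhdU m ε X), ↥(nbhdU m ε X)),
      (∀ p : ↥(nbhdU m ε X), (G p : EuclideanSpace ℝ (Fin m)) = gFn m ε X p) ∧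
      ∃ H : (ContinuousMap.id ↥(nbhdU m ε X)).Homotopy G,
        ∀ (t : I) (p : ↥(nbhdU m ε X)),
          (H (t, p) : EuclideanSpace ℝ (Fin m)) =
            (1 - (t : ℝ)) • (p : EuclideanSpace ℝ (Fin m)) +
              (t : ℝ) • gFn m ε X (p : EuclideanSpace ℝ (Fin m)) :=
  gFn_selfmap_homotopic_id_general m ε X
end

section
/- In the semilinear stratification setting: let K, K' ⊆ I and L, L' ⊆ J be such that σ_{K,L} ≠ ∅ and σ_{K',L'} ≠ ∅. Then the following three conditions are equivalent: (i) σ_{K',L'} ⊆ cl(σ_{K,L}); (ii) σ_{K',L'} ∩ cl(σ_{K,L}) ≠ ∅; (iii) K ⊆ K' and L ⊆ L'; where cl denotes closure in ℝ^S. (Equivalence (4.4) established in the proof of Lemma 4.7.) -/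
/-- The negative part `|t|_- = max(-t, 0)` of a real number. -/
def negPartR (t : ℝ) : ℝ := max (-t) 0

/-- `α(u) = max( max_{i∈I} |u_i| , max_{j∈J} |u_j|_- )` (both inner maxima padded by `0`,
which is harmless since all terms are nonnegative). -/
noncomputable def alphaFn {ι : Type*} (I J : Finset ι) (u : ι → ℝ) : ℝ :=
  max (I.fold max 0 fun i => |u i|) (J.fold max 0 fun j => negPartR (u j))

/-- `Ω = ⋃_{i∈I} {u : u_i ≠ 0} ∪ ⋃_{j∈J} {u : u_j < 0}`. -/
def OmegaSet {ι : Type*} (I J : Finset ι) : Set (ι → ℝ) :=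
  {u | (∃ i ∈ I, u i ≠ 0) ∨ (∃ j ∈ J, u j < 0)}

/-- The stratum `σ_{K,L}`. -/
noncomputable def sigmaSet {ι : Type*} (I J K L : Finset ι) : Set (ι → ℝ) :=
  {u | u ∈ OmegaSet I J ∧ (∀ i ∈ I, (i ∈ K ↔ alphaFn I J u = |u i|)) ∧
    (∀ j ∈ J, (j ∈ L ↔ alphaFn I J u = negPartR (u j)))}

/-!
For `u ∈ σ_{K',L'}` with `K ⊆ K'` and `L ⊆ L'`, shrink by a factor `t ∈ (0, 1)` every coordinate
outside `K ∪ L`. Since `I` and `J` are disjoint, the coordinates in `K ∪ L` keep the value `α(u)`,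
while all the others drop strictly below it; as `K ∪ L ≠ ∅` (because `σ_{K,L} ≠ ∅`), `α` is still
attained, so the shrunk point lies in `σ_{K,L}` and tends to `u` as `t → 1`.
Conversely `α` is continuous, so each condition `α(u) = |u_i|` defining `σ_{K,L}` survives
in its closure.
-/

theorem Continuous.finset_fold_max {ι X α : Type*} [TopologicalSpace X] [LinearOrder α]
    [TopologicalSpace α] [OrderClosedTopology α] (s : Finset ι) {f : ι → X → α}
    (hf : ∀ i, Continuous (f i)) {b : α} :
    Continuous fun x => s.fold max b fun i => f i x := by
  induction s using Finset.cons_induction with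
  | empty => exact continuous_const
  | cons a s ha ih =>
    simp only [Finset.fold_cons]
    exact (hf a).max ih

namespace SemilinearStratification

open Topology

variable {ι : Type*}

theorem negPartR_pos_iff {t : ℝ} : 0 < negPartR t ↔ t < 0 := by
  simp [negPartR]

theorem negPartR_mul {c : ℝ} (hc : 0 ≤ c) (t : ℝ) : negPartR (c * t) = c * negPartR t := by
  rw [negPartR, negPartR, mul_max_of_nonneg _ _ hc, mul_neg, mul_zero]

theorem continuous_negPartR : Continuous negPartR :=
  continuous_neg.max continuous_const

variable (I J : Finset ι)

theorem continuous_alphaFn : Continuous (alphaFn I J) :=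
  (Continuous.finset_fold_max I fun i => (continuous_apply i).abs).max
    (Continuous.finset_fold_max J fun j => continuous_negPartR.comp (continuous_apply j))

variable {I J}

theorem alphaFn_le_iff {u : ι → ℝ} {c : ℝ} :
    alphaFn I J u ≤ c ↔ 0 ≤ c ∧ (∀ i ∈ I, |u i| ≤ c) ∧ ∀ j ∈ J, negPartR (u j) ≤ c := by
  simp only [alphaFn, max_le_iff, Finset.fold_max_le]
  tauto

theorem alphaFn_lt_iff {u : ι → ℝ} {c : ℝ} :
    alphaFn I J u < c ↔ 0 < c ∧ (∀ i ∈ I, |u i| < c) ∧ ∀ j ∈ J, negPartR (u j) < c := by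
  simp only [alphaFn, max_lt_iff, Finset.fold_max_lt]
  tauto

theorem abs_le_alphaFn {u : ι → ℝ} {i : ι} (hi : i ∈ I) : |u i| ≤ alphaFn I J u :=
  (alphaFn_le_iff.1 le_rfl).2.1 i hi

theorem negPartR_le_alphaFn {u : ι → ℝ} {j : ι} (hj : j ∈ J) :
    negPartR (u j) ≤ alphaFn I J u :=
  (alphaFn_le_iff.1 le_rfl).2.2 j hj

theorem alphaFn_pos_of_mem_OmegaSet {u : ι → ℝ} (hu : u ∈ OmegaSet I J) : 0 < alphaFn I J u := by
  rcases hu with ⟨i, hi, h⟩ | ⟨j, hj, h⟩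
  · exact (abs_pos.2 h).trans_le (abs_le_alphaFn hi)
  · exact (negPartR_pos_iff.2 h).trans_le (negPartR_le_alphaFn hj)

theorem nonempty_or_nonempty_of_sigmaSet_nonempty {K L : Finset ι}
    (h : (sigmaSet I J K L).Nonempty) : K.Nonempty ∨ L.Nonempty := by
  obtain ⟨u, hΩ, huK, huL⟩ := h
  by_contra! hKL
  refine lt_irrefl (alphaFn I J u) <| alphaFn_lt_iff.2
    ⟨alphaFn_pos_of_mem_OmegaSet hΩ, fun i hi => ?_, fun j hj => ?_⟩
  · exact (abs_le_alphaFn hi).lt_of_ne fun h => Finset.notMem_empty i (hKL.1 ▸ (huK i hi).2 h.symm)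
  · exact (negPartR_le_alphaFn hj).lt_of_ne fun h => Finset.notMem_empty j (hKL.2 ▸ (huL j hj).2 h.symm)

theorem mem_sigmaSet_of_level {K L : Finset ι} {v : ι → ℝ} {c : ℝ} (hc : 0 < c)
    (hK : K ⊆ I) (hL : L ⊆ J) (hKL : K.Nonempty ∨ L.Nonempty)
    (hvK : ∀ i ∈ K, |v i| = c) (hvI : ∀ i ∈ I, i ∉ K → |v i| < c)
    (hvL : ∀ j ∈ L, negPartR (v j) = c) (hvJ : ∀ j ∈ J, j ∉ L → negPartR (v j) < c) :
    v ∈ sigmaSet I J K L := by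
  have hα : alphaFn I J v = c := by
    refine le_antisymm (alphaFn_le_iff.2 ⟨hc.le, fun i hi => ?_, fun j hj => ?_⟩) ?_
    · by_cases hiK : i ∈ K
      exacts [(hvK i hiK).le, (hvI i hi hiK).le]
    · by_cases hjL : j ∈ L
      exacts [(hvL j hjL).le, (hvJ j hj hjL).le]
    · rcases hKL with ⟨i, hi⟩ | ⟨j, hj⟩
      · exact hvK i hi ▸ abs_le_alphaFn (hK hi)
      · exact hvL j hj ▸ negPartR_le_alphaFn (hL hj)
  refine ⟨?_, fun i hi => ?_, fun j hj => ?_⟩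
  · rcases hKL with ⟨i, hi⟩ | ⟨j, hj⟩
    · exact Or.inl ⟨i, hK hi, abs_pos.1 (hvK i hi ▸ hc)⟩
    · exact Or.inr ⟨j, hL hj, negPartR_pos_iff.1 (hvL j hj ▸ hc)⟩
  · rw [hα]
    exact ⟨fun hiK => (hvK i hiK).symm,
      fun h => by_contra fun hiK => (hvI i hi hiK).ne h.symm⟩
  · rw [hα]
    exact ⟨fun hjL => (hvL j hjL).symm,
      fun h => by_contra fun hjL => (hvJ j hj hjL).ne h.symm⟩

theorem mem_sigmaSet_of_shrink (hIJ : Disjoint I J) {K K' L L' : Finset ι} (hK : K ⊆ I)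
    (hL : L ⊆ J) (hKL : K.Nonempty ∨ L.Nonempty) (hKK' : K ⊆ K') (hLL' : L ⊆ L')
    {u v : ι → ℝ} {t : ℝ} (hu : u ∈ sigmaSet I J K' L') (ht₀ : 0 ≤ t) (ht₁ : t < 1)
    (hfix : ∀ x, x ∈ K ∨ x ∈ L → v x = u x) (hshrink : ∀ x, x ∉ K → x ∉ L → v x = t * u x) :
    v ∈ sigmaSet I J K L := by
  obtain ⟨hΩ, huK, huL⟩ := hu
  have ha := alphaFn_pos_of_mem_OmegaSet hΩ
  have hlt {s : ℝ} (hs : s ≤ alphaFn I J u) : t * s < alphaFn I J u :=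
    (mul_le_mul_of_nonneg_left hs ht₀).trans_lt (mul_lt_of_lt_one_left ha ht₁)
  refine mem_sigmaSet_of_level ha hK hL hKL (fun i hi => ?_) (fun i hi hiK => ?_)
    (fun j hj => ?_) (fun j hj hjL => ?_)
  · rw [hfix i (.inl hi)]
    exact ((huK i (hK hi)).1 (hKK' hi)).symm
  · rw [hshrink i hiK fun h => Finset.disjoint_left.1 hIJ hi (hL h), abs_mul, abs_of_nonneg ht₀]
    exact hlt (abs_le_alphaFn hi)
  · rw [hfix j (.inr hj)]
    exact ((huL j (hL hj)).1 (hLL' hj)).symm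
  · rw [hshrink j (fun h => Finset.disjoint_left.1 hIJ (hK h) hj) hjL, negPartR_mul ht₀]
    exact hlt (negPartR_le_alphaFn hj)

theorem sigmaSet_subset_closure (hIJ : Disjoint I J) {K K' L L' : Finset ι} (hK : K ⊆ I)
    (hL : L ⊆ J) (hKL : K.Nonempty ∨ L.Nonempty) (hKK' : K ⊆ K') (hLL' : L ⊆ L') :
    sigmaSet I J K' L' ⊆ closure (sigmaSet I J K L) := by
  classical
  intro u hu
  let γ : ℝ → ι → ℝ := fun t x => if x ∈ K ∨ x ∈ L then u x else t * u x
  have hγ : Continuous γ := continuous_pi fun x => by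
    by_cases hx : x ∈ K ∨ x ∈ L <;> simp only [γ, hx, if_true, if_false] <;> fun_prop
  have hγ₁ : γ 1 = u := funext fun x => by simp [γ]
  refine mem_closure_of_tendsto (b := 𝓝[<] 1)
    (hγ₁ ▸ (hγ.tendsto 1).mono_left nhdsWithin_le_nhds) ?_
  filter_upwards [Ioo_mem_nhdsLT one_pos] with t ht
  exact mem_sigmaSet_of_shrink hIJ hK hL hKL hKK' hLL' hu ht.1.le ht.2
    (fun x hx => if_pos hx) (fun x hxK hxL => if_neg (not_or.2 ⟨hxK, hxL⟩))

theorem subset_of_mem_sigmaSet_of_mem_closure {K K' L L' : Finset ι} (hK : K ⊆ I) (hL : L ⊆ J)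
    {u : ι → ℝ} (hu : u ∈ sigmaSet I J K' L') (hcl : u ∈ closure (sigmaSet I J K L)) :
    K ⊆ K' ∧ L ⊆ L' := by
  refine ⟨fun i hi => (hu.2.1 i (hK hi)).2 ?_, fun j hj => (hu.2.2 j (hL hj)).2 ?_⟩
  · have hclosed : IsClosed {v : ι → ℝ | alphaFn I J v = |v i|} :=
      isClosed_eq (continuous_alphaFn I J) (continuous_apply i).abs
    exact closure_minimal (fun w hw => (hw.2.1 i (hK hi)).1 hi) hclosed hcl
  · have hclosed : IsClosed {v : ι → ℝ | alphaFn I J v = negPartR (v j)} :=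
      isClosed_eq (continuous_alphaFn I J) (continuous_negPartR.comp (continuous_apply j))
    exact closure_minimal (fun w hw => (hw.2.2 j (hL hj)).1 hj) hclosed hcl

end SemilinearStratification

open SemilinearStratification in
theorem sigmaSet_closure_tfae_general
    {ι : Type*}
    (I J : Finset ι) (hIJ : Disjoint I J)
    (K K' L L' : Finset ι) (hK : K ⊆ I) (hL : L ⊆ J)
    (hσ : (sigmaSet I J K L).Nonempty) (hσ' : (sigmaSet I J K' L').Nonempty) :
    (sigmaSet I J K' L' ⊆ closure (sigmaSet I J K L) ↔ (K ⊆ K' ∧ L ⊆ L')) ∧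
    ((sigmaSet I J K' L' ∩ closure (sigmaSet I J K L)).Nonempty ↔ (K ⊆ K' ∧ L ⊆ L')) := by
  have hiii_i : K ⊆ K' ∧ L ⊆ L' → sigmaSet I J K' L' ⊆ closure (sigmaSet I J K L) := fun h =>
    sigmaSet_subset_closure hIJ hK hL (nonempty_or_nonempty_of_sigmaSet_nonempty hσ) h.1 h.2
  have hii_iii : (sigmaSet I J K' L' ∩ closure (sigmaSet I J K L)).Nonempty → K ⊆ K' ∧ L ⊆ L' :=
    fun ⟨_, hu, hcl⟩ => subset_of_mem_sigmaSet_of_mem_closure hK hL hu hcl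
  obtain ⟨u, hu⟩ := hσ'
  exact ⟨⟨fun h => hii_iii ⟨u, hu, h hu⟩, hiii_i⟩, ⟨hii_iii, fun h => ⟨u, hu, hiii_i h hu⟩⟩⟩

/-- equivalence (4.4) in the proof of Lemma 4.7.  In the semilinear
stratification setting, for `K, K' ⊆ I` and `L, L' ⊆ J` with `σ_{K,L} ≠ ∅` and
`σ_{K',L'} ≠ ∅`, the conditions (i) `σ_{K',L'} ⊆ cl(σ_{K,L})`,
(ii) `σ_{K',L'} ∩ cl(σ_{K,L}) ≠ ∅`, and (iii) `K ⊆ K' ∧ L ⊆ L'` are equivalent. -/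
theorem sigmaSet_closure_tfae
    {ι : Type*} [Fintype ι] [DecidableEq ι] [Nonempty ι]
    (I J : Finset ι) (hIJ : Disjoint I J) (hIJunion : I ∪ J = Finset.univ)
    (K K' L L' : Finset ι) (hK : K ⊆ I) (hK' : K' ⊆ I) (hL : L ⊆ J) (hL' : L' ⊆ J)
    (hσ : (sigmaSet I J K L).Nonempty) (hσ' : (sigmaSet I J K' L').Nonempty) :
    (sigmaSet I J K' L' ⊆ closure (sigmaSet I J K L) ↔ (K ⊆ K' ∧ L ⊆ L')) ∧
    ((sigmaSet I J K' L' ∩ closure (sigmaSet I J K L)).Nonempty ↔ (K ⊆ K' ∧ L ⊆ L')) :=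
  sigmaSet_closure_tfae_general I J hIJ K K' L L' hK hL hσ hσ'
end

section
/- In the semilinear stratification setting: let K ⊆ K' ⊆ I and L ⊆ L' ⊆ J with K ∪ L ≠ ∅. Then for every u ∈ σ_{K',L'} and every δ ∈ (0,1), the point v ∈ ℝ^S defined by v_t := (1−δ)·u_t for t ∈ (K'∖K) ∪ (L'∖L) and v_t := u_t for all other t ∈ S, belongs to σ_{K,L} and satisfies α(v) = α(u). In particular, every u ∈ σ_{K',L'} lies in the closure of σ_{K,L} and α(σ_{K',L'}) ⊆ α(σ_{K,L}). (Part (3) of Lemma 4.7 and its proof.) -/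
lemma negPartR_nonneg (t : ℝ) : 0 ≤ negPartR t := le_max_right _ _

lemma negPartR_mul {c : ℝ} (hc : 0 ≤ c) (t : ℝ) : negPartR (c * t) = c * negPartR t := by
  unfold negPartR
  rw [← mul_neg, mul_max_of_nonneg _ _ hc, mul_zero]

lemma negPartR_pos {t : ℝ} : 0 < negPartR t ↔ t < 0 := by
  simp [negPartR, lt_max_iff, neg_pos]

lemma abs_le_alpha {ι : Type*} (I J : Finset ι) (u : ι → ℝ) {i : ι} (hi : i ∈ I) :
    |u i| ≤ alphaFn I J u :=
  le_trans ((Finset.le_fold_max _).2 (Or.inr ⟨i, hi, le_rfl⟩)) (le_max_left _ _)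

lemma negPart_le_alpha {ι : Type*} (I J : Finset ι) (u : ι → ℝ) {j : ι} (hj : j ∈ J) :
    negPartR (u j) ≤ alphaFn I J u :=
  le_trans ((Finset.le_fold_max _).2 (Or.inr ⟨j, hj, le_rfl⟩)) (le_max_right _ _)

lemma alpha_le {ι : Type*} (I J : Finset ι) (u : ι → ℝ) {c : ℝ} (hc : 0 ≤ c)
    (h1 : ∀ i ∈ I, |u i| ≤ c) (h2 : ∀ j ∈ J, negPartR (u j) ≤ c) : alphaFn I J u ≤ c :=
  max_le ((Finset.fold_max_le _).2 ⟨hc, h1⟩) ((Finset.fold_max_le _).2 ⟨hc, h2⟩)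

lemma alpha_pos {ι : Type*} (I J : Finset ι) {u : ι → ℝ} (hu : u ∈ OmegaSet I J) :
    0 < alphaFn I J u := by
  rcases hu with ⟨i, hi, hne⟩ | ⟨j, hj, hneg⟩
  · exact lt_of_lt_of_le (abs_pos.2 hne) (abs_le_alpha I J u hi)
  · exact lt_of_lt_of_le (negPartR_pos.2 hneg) (negPart_le_alpha I J u hj)

lemma sigma_core {ι : Type*} [DecidableEq ι]
    (I J : Finset ι) (hIJ : Disjoint I J)
    (K K' L L' : Finset ι) (hKK' : K ⊆ K') (hK' : K' ⊆ I) (hLL' : L ⊆ L') (hL' : L' ⊆ J)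
    (hKL : (K ∪ L).Nonempty)
    {u : ι → ℝ} (hu : u ∈ sigmaSet I J K' L') {δ : ℝ} (hδ : δ ∈ Set.Ioo (0 : ℝ) 1) :
    (fun t => if t ∈ (K' \ K) ∪ (L' \ L) then (1 - δ) * u t else u t) ∈ sigmaSet I J K L ∧
      alphaFn I J (fun t => if t ∈ (K' \ K) ∪ (L' \ L) then (1 - δ) * u t else u t) =
        alphaFn I J u := by
  obtain ⟨hΩ, hI, hJ⟩ := hu
  set v : ι → ℝ := fun t => if t ∈ (K' \ K) ∪ (L' \ L) then (1 - δ) * u t else u t with hv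
  have hα : 0 < alphaFn I J u := alpha_pos I J hΩ
  have h1δ : 0 < 1 - δ := by linarith [hδ.2]
  have h1δ1 : 1 - δ < 1 := by linarith [hδ.1]
  -- describe v on I and on J
  have hcI : ∀ i ∈ I, (i ∈ (K' \ K) ∪ (L' \ L)) ↔ i ∈ K' \ K := by
    intro i hi
    simp only [Finset.mem_union]
    refine ⟨fun h => h.resolve_right fun h' => ?_, Or.inl⟩
    exact Finset.disjoint_left.1 hIJ hi (hL' (Finset.mem_sdiff.1 h').1)
  have hcJ : ∀ j ∈ J, (j ∈ (K' \ K) ∪ (L' \ L)) ↔ j ∈ L' \ L := by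
    intro j hj
    simp only [Finset.mem_union]
    refine ⟨fun h => h.resolve_left fun h' => ?_, Or.inr⟩
    exact Finset.disjoint_left.1 hIJ (hK' (Finset.mem_sdiff.1 h').1) hj
  have hvI : ∀ i ∈ I, v i = if i ∈ K' \ K then (1 - δ) * u i else u i := by
    intro i hi; simp only [hv]; rw [if_congr (hcI i hi) rfl rfl]
  have hvJ : ∀ j ∈ J, v j = if j ∈ L' \ L then (1 - δ) * u j else u j := by
    intro j hj; simp only [hv]; rw [if_congr (hcJ j hj) rfl rfl]
  -- bounds on coordinates of v
  have habsI : ∀ i ∈ I, |v i| ≤ |u i| := by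
    intro i hi
    rw [hvI i hi]
    split
    · rw [abs_mul, abs_of_pos h1δ]
      nlinarith [abs_nonneg (u i)]
    · exact le_rfl
  have hnegJ : ∀ j ∈ J, negPartR (v j) ≤ negPartR (u j) := by
    intro j hj
    rw [hvJ j hj]
    split
    · rw [negPartR_mul h1δ.le]
      nlinarith [negPartR_nonneg (u j)]
    · exact le_rfl
  have hαv_le : alphaFn I J v ≤ alphaFn I J u :=
    alpha_le I J v hα.le
      (fun i hi => le_trans (habsI i hi) (abs_le_alpha I J u hi))
      (fun j hj => le_trans (hnegJ j hj) (negPart_le_alpha I J u hj))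
  -- the witness coordinate is untouched and realizes α(u)
  have hwit : ∃ t, (t ∈ I ∧ t ∈ K ∧ |v t| = alphaFn I J u) ∨
      (t ∈ J ∧ t ∈ L ∧ negPartR (v t) = alphaFn I J u) := by
    obtain ⟨k, hk⟩ := hKL
    rcases Finset.mem_union.1 hk with hkK | hkL
    · refine ⟨k, Or.inl ⟨hK' (hKK' hkK), hkK, ?_⟩⟩
      have : v k = u k := by
        rw [hvI k (hK' (hKK' hkK)), if_neg (fun h => (Finset.mem_sdiff.1 h).2 hkK)]
      rw [this, ← (hI k (hK' (hKK' hkK))).1 (hKK' hkK)]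
    · refine ⟨k, Or.inr ⟨hL' (hLL' hkL), hkL, ?_⟩⟩
      have : v k = u k := by
        rw [hvJ k (hL' (hLL' hkL)), if_neg (fun h => (Finset.mem_sdiff.1 h).2 hkL)]
      rw [this, ← (hJ k (hL' (hLL' hkL))).1 (hLL' hkL)]
  have hαv : alphaFn I J v = alphaFn I J u := by
    refine le_antisymm hαv_le ?_
    obtain ⟨t, ht | ht⟩ := hwit
    · rw [← ht.2.2]; exact abs_le_alpha I J v ht.1
    · rw [← ht.2.2]; exact negPart_le_alpha I J v ht.1
  refine ⟨⟨?_, ?_, ?_⟩, hαv⟩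
  · -- v ∈ Ω
    obtain ⟨t, ht | ht⟩ := hwit
    · exact Or.inl ⟨t, ht.1, fun h => by rw [h, abs_zero] at ht; exact hα.ne' ht.2.2.symm⟩
    · refine Or.inr ⟨t, ht.1, negPartR_pos.1 ?_⟩
      rw [ht.2.2]; exact hα
  · -- I-condition
    intro i hi
    rw [hαv]
    constructor
    · intro hiK
      have hvi : v i = u i := by
        rw [hvI i hi, if_neg (fun h => (Finset.mem_sdiff.1 h).2 hiK)]
      rw [hvi, ← (hI i hi).1 (hKK' hiK)]
    · intro heq
      by_contra hiK
      by_cases hiK' : i ∈ K'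
      · have hvi : v i = (1 - δ) * u i := by
          rw [hvI i hi, if_pos (Finset.mem_sdiff.2 ⟨hiK', hiK⟩)]
        have hui : |u i| = alphaFn I J u := ((hI i hi).1 hiK').symm
        rw [hvi, abs_mul, abs_of_pos h1δ, hui] at heq
        nlinarith
      · have hvi : v i = u i := by
          rw [hvI i hi, if_neg (fun h => hiK' (Finset.mem_sdiff.1 h).1)]
        rw [hvi] at heq
        exact hiK' ((hI i hi).2 heq)
  · -- J-condition
    intro j hj
    rw [hαv]
    constructor
    · intro hjL
      have hvj : v j = u j := by
        rw [hvJ j hj, if_neg (fun h => (Finset.mem_sdiff.1 h).2 hjL)]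
      rw [hvj, ← (hJ j hj).1 (hLL' hjL)]
    · intro heq
      by_contra hjL
      by_cases hjL' : j ∈ L'
      · have hvj : v j = (1 - δ) * u j := by
          rw [hvJ j hj, if_pos (Finset.mem_sdiff.2 ⟨hjL', hjL⟩)]
        have huj : negPartR (u j) = alphaFn I J u := ((hJ j hj).1 hjL').symm
        rw [hvj, negPartR_mul h1δ.le, huj] at heq
        nlinarith
      · have hvj : v j = u j := by
          rw [hvJ j hj, if_neg (fun h => hjL' (Finset.mem_sdiff.1 h).1)]
        rw [hvj] at heq
        exact hjL' ((hJ j hj).2 heq)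

/-- part (3) of Lemma 4.7 and its proof.  Let `K ⊆ K' ⊆ I` and
`L ⊆ L' ⊆ J` with `K ∪ L ≠ ∅`.  For every `u ∈ σ_{K',L'}` and every `δ ∈ (0,1)`, the
point `v` obtained from `u` by multiplying the coordinates indexed by
`(K' ∖ K) ∪ (L' ∖ L)` by `1 - δ` belongs to `σ_{K,L}` and satisfies `α(v) = α(u)`.
In particular `σ_{K',L'} ⊆ cl(σ_{K,L})` and `α(σ_{K',L'}) ⊆ α(σ_{K,L})`. -/
theorem sigmaSet_perturb_mem
    {ι : Type*} [Fintype ι] [DecidableEq ι] [Nonempty ι]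
    (I J : Finset ι) (hIJ : Disjoint I J) (hIJunion : I ∪ J = Finset.univ)
    (K K' L L' : Finset ι) (hKK' : K ⊆ K') (hK' : K' ⊆ I) (hLL' : L ⊆ L') (hL' : L' ⊆ J)
    (hKL : (K ∪ L).Nonempty) :
    (∀ u ∈ sigmaSet I J K' L', ∀ δ ∈ Set.Ioo (0 : ℝ) 1,
      (fun t => if t ∈ (K' \ K) ∪ (L' \ L) then (1 - δ) * u t else u t) ∈
          sigmaSet I J K L ∧
        alphaFn I J (fun t => if t ∈ (K' \ K) ∪ (L' \ L) then (1 - δ) * u t else u t) =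
          alphaFn I J u) ∧
    sigmaSet I J K' L' ⊆ closure (sigmaSet I J K L) ∧
    alphaFn I J '' sigmaSet I J K' L' ⊆ alphaFn I J '' sigmaSet I J K L := by
  have core := fun {u} hu {δ} hδ =>
    sigma_core I J hIJ K K' L L' hKK' hK' hLL' hL' hKL (u := u) hu (δ := δ) hδ
  refine ⟨fun u hu δ hδ => core hu hδ, ?_, ?_⟩
  · -- closure
    intro u hu
    have hδn : ∀ n : ℕ, ((n : ℝ) + 2)⁻¹ ∈ Set.Ioo (0 : ℝ) 1 := by
      intro n
      constructor
      · positivity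
      · rw [inv_lt_one_iff₀]
        right
        have : (0 : ℝ) ≤ (n : ℝ) := Nat.cast_nonneg n
        linarith
    have hmem : ∀ n : ℕ,
        (fun t => if t ∈ (K' \ K) ∪ (L' \ L) then (1 - ((n : ℝ) + 2)⁻¹) * u t else u t) ∈
          sigmaSet I J K L := fun n => (core hu (hδn n)).1
    have htend : Filter.Tendsto
        (fun n : ℕ => fun t =>
          if t ∈ (K' \ K) ∪ (L' \ L) then (1 - ((n : ℝ) + 2)⁻¹) * u t else u t)
        Filter.atTop (nhds u) := by
      rw [tendsto_pi_nhds]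
      intro t
      by_cases ht : t ∈ (K' \ K) ∪ (L' \ L)
      · simp only [ht, if_true]
        have h0 : Filter.Tendsto (fun n : ℕ => ((n : ℝ) + 2)⁻¹) Filter.atTop (nhds 0) :=
          tendsto_inv_atTop_zero.comp
            (Filter.tendsto_atTop_add_const_right _ 2 tendsto_natCast_atTop_atTop)
        have := ((tendsto_const_nhds.sub h0).mul tendsto_const_nhds :
          Filter.Tendsto (fun n : ℕ => (1 - ((n : ℝ) + 2)⁻¹) * u t) Filter.atTop
            (nhds ((1 - 0) * u t)))
        simpa using this
      · simp only [ht, if_false]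
        exact tendsto_const_nhds
    exact mem_closure_of_tendsto htend (Filter.Eventually.of_forall hmem)
  · -- image
    rintro x ⟨u, hu, rfl⟩
    have h12 : (1 / 2 : ℝ) ∈ Set.Ioo (0 : ℝ) 1 := by norm_num
    obtain ⟨hmem, heq⟩ := core hu h12
    exact ⟨_, hmem, heq⟩
end

section
/- In the semilinear stratification setting: for every K ⊆ I and L ⊆ J, the set σ_{K,L} is a locally closed subset of ℝ^S, i.e., it is the intersection of an open subset and a closed subset of ℝ^S. (Part of assertion (1) of Lemma 4.7: each σ_{K,L} is obtained as the intersection of an open set with a finite union of linear subspaces.) -/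
open Set

section LocallyClosed

variable {X : Type*} [TopologicalSpace X]

theorem IsLocallyClosed.biInter_finset {ι : Type*} (s : Finset ι) {t : ι → Set X}
    (ht : ∀ i ∈ s, IsLocallyClosed (t i)) : IsLocallyClosed (⋂ i ∈ s, t i) := by
  classical
  induction s using Finset.induction_on with
  | empty => simpa using isClosed_univ.isLocallyClosed
  | insert i s _ ih =>
    rw [Finset.set_biInter_insert]
    exact (ht i (s.mem_insert_self i)).inter
      (ih fun j hj => ht j (Finset.mem_insert_of_mem hj))

theorem isLocallyClosed_setOf_iff_eq {Y : Type*} [TopologicalSpace Y] [T2Space Y] (p : Prop)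
    {f g : X → Y} (hf : Continuous f) (hg : Continuous g) :
    IsLocallyClosed {x | p ↔ f x = g x} := by
  by_cases hp : p
  · simpa only [hp, true_iff] using (isClosed_eq hf hg).isLocallyClosed
  · simpa only [hp, false_iff] using (isOpen_ne_fun hf hg).isLocallyClosed

end LocallyClosed

theorem continuous_finset_fold_max {X α ι : Type*} [TopologicalSpace X] [LinearOrder α]
    [TopologicalSpace α] [OrderClosedTopology α] (s : Finset ι) (b : α) {f : ι → X → α}
    (hf : ∀ i ∈ s, Continuous (f i)) : Continuous fun x => s.fold max b fun i => f i x := by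
  classical
  induction s using Finset.induction_on with
  | empty => exact continuous_const
  | insert i s hi ih =>
    simp only [Finset.fold_insert hi]
    exact (hf i (s.mem_insert_self i)).max
      (ih fun j hj => hf j (Finset.mem_insert_of_mem hj))

theorem continuous_negPartR : Continuous negPartR :=
  continuous_neg.max continuous_const

section Stratum

variable {ι : Type*} (I J : Finset ι)

theorem continuous_alphaFn : Continuous (alphaFn I J) :=
  (continuous_finset_fold_max I 0 fun i _ => (continuous_apply i).abs).max
    (continuous_finset_fold_max J 0 fun j _ => continuous_negPartR.comp (continuous_apply j))

theorem isOpen_omegaSet : IsOpen (OmegaSet I J) := by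
  have hΩ : OmegaSet I J = (⋃ i ∈ I, {u | u i ≠ 0}) ∪ ⋃ j ∈ J, {u | u j < 0} := by
    ext u
    simp [OmegaSet]
  rw [hΩ]
  exact (isOpen_biUnion fun i _ => isOpen_ne_fun (continuous_apply i) continuous_const).union
    (isOpen_biUnion fun j _ => isOpen_lt (continuous_apply j) continuous_const)

theorem sigmaSet_eq_omegaSet_inter (K L : Finset ι) :
    sigmaSet I J K L = OmegaSet I J ∩ (⋂ i ∈ I, {u | i ∈ K ↔ alphaFn I J u = |u i|}) ∩
      ⋂ j ∈ J, {u | j ∈ L ↔ alphaFn I J u = negPartR (u j)} := by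
  ext u
  simp only [sigmaSet, mem_ofPred_eq, mem_inter_iff, mem_iInter, and_assoc]

end Stratum

theorem sigmaSet_locallyClosed_general
    {ι : Type*} (I J : Finset ι) (K L : Finset ι) :
    ∃ U F : Set (ι → ℝ), IsOpen U ∧ IsClosed F ∧ sigmaSet I J K L = U ∩ F := by
  change IsLocallyClosed (sigmaSet I J K L)
  rw [sigmaSet_eq_omegaSet_inter]
  refine ((isOpen_omegaSet I J).isLocallyClosed.inter ?_).inter ?_
  · exact IsLocallyClosed.biInter_finset I fun i _ =>
      isLocallyClosed_setOf_iff_eq _ (continuous_alphaFn I J) (continuous_apply i).abs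
  · exact IsLocallyClosed.biInter_finset J fun j _ =>
      isLocallyClosed_setOf_iff_eq _ (continuous_alphaFn I J)
        (continuous_negPartR.comp (continuous_apply j))

/-- part of assertion (1) of Lemma 4.7.  In the semilinear
stratification setting, each stratum `σ_{K,L}` is a locally closed subset of `ℝ^S`,
i.e., it is the intersection of an open subset and a closed subset of `ℝ^S`. -/
theorem sigmaSet_locallyClosed
    {ι : Type*} [Fintype ι] [DecidableEq ι] [Nonempty ι]
    (I J : Finset ι) (hIJ : Disjoint I J) (hIJunion : I ∪ J = Finset.univ)
    (K L : Finset ι) (hK : K ⊆ I) (hL : L ⊆ J) :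
    ∃ U F : Set (ι → ℝ), IsOpen U ∧ IsClosed F ∧ sigmaSet I J K L = U ∩ F :=
  sigmaSet_locallyClosed_general I J K L
end
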